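/- arXiv:2602.11538 — 5 statements merged into one kernel-verified Lean document; each statement's English description precedes it below -/
import Mathlib

section
/- Let G be a group, m ∈ G, A a ℤ/2-algebra, and c : G → A a function with c(e) = 0 and c(g₁ * g₂) + c(g₁ * m * g₂) = c(g₁) * c(g₂) for all g₁, g₂ ∈ G. Then for every g ∈ G, c(g * m⁻¹) = c(g) and c(m * g * m⁻¹) = c(g). In particular, the conjugation action by the meridian m is trivial on the values of c. -/
/-!
Taking `g₂ = 1` (resp. `g₁ = 1`) in the skein relation kills the right-hand side, because
`c 1 = 0`, so right (resp. left) multiplication by `m` negates `c`. Hence `c (g * m⁻¹) = -c g`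
and conjugation by `m` negates `c` twice; over `ℤ/2` negation is the identity.
-/

section SkeinRelation

variable {G A : Type*} [Group G] [NonUnitalNonAssocRing A] {m : G} {c : G → A}

theorem apply_mul_right_eq_neg (h1 : c 1 = 0)
    (hsk : ∀ g₁ g₂ : G, c (g₁ * g₂) + c (g₁ * m * g₂) = c g₁ * c g₂) (g : G) :
    c (g * m) = -c g := by
  have := hsk g 1
  rw [h1, mul_zero, mul_one, mul_one] at this
  exact eq_neg_of_add_eq_zero_right this

theorem apply_mul_left_eq_neg (h1 : c 1 = 0)
    (hsk : ∀ g₁ g₂ : G, c (g₁ * g₂) + c (g₁ * m * g₂) = c g₁ * c g₂) (g : G) :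
    c (m * g) = -c g := by
  have := hsk 1 g
  rw [h1, zero_mul, one_mul, one_mul] at this
  exact eq_neg_of_add_eq_zero_right this

theorem apply_mul_inv_right_eq_neg (h1 : c 1 = 0)
    (hsk : ∀ g₁ g₂ : G, c (g₁ * g₂) + c (g₁ * m * g₂) = c g₁ * c g₂) (g : G) :
    c (g * m⁻¹) = -c g := by
  rw [← inv_mul_cancel_right g m, apply_mul_right_eq_neg h1 hsk, neg_neg, inv_mul_cancel_right]

theorem apply_conj_eq (h1 : c 1 = 0)
    (hsk : ∀ g₁ g₂ : G, c (g₁ * g₂) + c (g₁ * m * g₂) = c g₁ * c g₂) (g : G) :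
    c (m * g * m⁻¹) = c g := by
  rw [mul_assoc, apply_mul_left_eq_neg h1 hsk, apply_mul_inv_right_eq_neg h1 hsk, neg_neg]

end SkeinRelation

/-- Conjugation by the meridian acts trivially on ℤ/2 cord-algebra values. -/
theorem cord_meridian_conjugation_trivial
    {G : Type*} [Group G] {A : Type*} [Ring A] [Algebra (ZMod 2) A]
    (m : G) (c : G → A) (h1 : c 1 = 0)
    (hsk : ∀ g₁ g₂ : G, c (g₁ * g₂) + c (g₁ * m * g₂) = c g₁ * c g₂) :
    ∀ g : G, c (g * m⁻¹) = c g ∧ c (m * g * m⁻¹) = c g := fun g =>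
  ⟨(apply_mul_inv_right_eq_neg h1 hsk g).trans (ZModModule.neg_eq_self (c g)),
    apply_conj_eq h1 hsk g⟩
end

section
/- Let G be a group, m ∈ G, A a ℤ/2-algebra, and c : G → A a function with c(e) = 0 and c(g₁ * g₂) + c(g₁ * m * g₂) = c(g₁) * c(g₂) for all g₁, g₂ ∈ G. Then for every k ∈ ℕ and all g₁, g₂ ∈ G, c(g₁ * m^(2k) * g₂) = c(g₁ * g₂). -/
/-!
Over `ℤ/2` the relation reads `c (g₁ * m * g₂) = c (g₁ * g₂) + c g₁ * c g₂`. Taking `g₂ = 1`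
and using `c 1 = 0` shows that right multiplication by `m` does not change `c`, so inserting `m`
twice adds the same correction term `c g₁ * c g₂` twice, which cancels in characteristic two.
-/

theorem add_self_eq_zero_of_algebra_zmod_two {R : Type*} [Ring R] [Algebra (ZMod 2) R] (a : R) :
    a + a = 0 := by
  have h2 : (2 : R) = 0 := by
    rw [← map_ofNat (algebraMap (ZMod 2) R) 2, show (2 : ZMod 2) = 0 from rfl, map_zero]
  rw [← two_mul, h2, zero_mul]

section SkeinRelation

variable {G A : Type*} [Group G] [NonUnitalNonAssocRing A] {m : G} {c : G → A}

theorem apply_mul_mul_eq_add_of_skein (hA : ∀ a : A, a + a = 0)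
    (hsk : ∀ g₁ g₂ : G, c (g₁ * g₂) + c (g₁ * m * g₂) = c g₁ * c g₂) (g₁ g₂ : G) :
    c (g₁ * m * g₂) = c (g₁ * g₂) + c g₁ * c g₂ := by
  rw [← hsk, ← add_assoc, hA, zero_add]

theorem apply_mul_pow_of_skein (hA : ∀ a : A, a + a = 0) (h1 : c 1 = 0)
    (hsk : ∀ g₁ g₂ : G, c (g₁ * g₂) + c (g₁ * m * g₂) = c g₁ * c g₂) (j : ℕ) (g : G) :
    c (g * m ^ j) = c g := by
  induction j with
  | zero => rw [pow_zero, mul_one]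
  | succ j ih =>
    simpa [pow_succ, ← mul_assoc, h1, ih] using apply_mul_mul_eq_add_of_skein hA hsk (g * m ^ j) 1

theorem apply_mul_pow_add_two_mul_of_skein (hA : ∀ a : A, a + a = 0) (h1 : c 1 = 0)
    (hsk : ∀ g₁ g₂ : G, c (g₁ * g₂) + c (g₁ * m * g₂) = c g₁ * c g₂) (j : ℕ) (g₁ g₂ : G) :
    c (g₁ * m ^ (j + 2) * g₂) = c (g₁ * m ^ j * g₂) := by
  have hstep := apply_mul_mul_eq_add_of_skein hA hsk
  have hpow := apply_mul_pow_of_skein hA h1 hsk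
  calc c (g₁ * m ^ (j + 2) * g₂)
      = c (g₁ * m ^ (j + 1) * m * g₂) := by rw [mul_assoc g₁ (m ^ (j + 1)), ← pow_succ]
    _ = c (g₁ * m ^ j * m * g₂) + c g₁ * c g₂ := by
        rw [hstep, hpow, mul_assoc g₁ (m ^ j), ← pow_succ]
    _ = c (g₁ * m ^ j * g₂) + c g₁ * c g₂ + c g₁ * c g₂ := by rw [hstep, hpow]
    _ = c (g₁ * m ^ j * g₂) := by rw [add_assoc, hA, add_zero]

end SkeinRelation

/-- Inserting an even power of the meridian does not change the cord-algebra value over ℤ/2. -/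
theorem cord_even_meridian_power
    {G : Type*} [Group G] {A : Type*} [Ring A] [Algebra (ZMod 2) A]
    (m : G) (c : G → A) (h1 : c 1 = 0)
    (hsk : ∀ g₁ g₂ : G, c (g₁ * g₂) + c (g₁ * m * g₂) = c g₁ * c g₂) :
    ∀ (k : ℕ) (g₁ g₂ : G), c (g₁ * m ^ (2 * k) * g₂) = c (g₁ * g₂) := by
  intro k g₁ g₂
  induction k with
  | zero => rw [mul_zero, pow_zero, mul_one]
  | succ k ih =>
    rw [mul_add_one, apply_mul_pow_add_two_mul_of_skein add_self_eq_zero_of_algebra_zmod_two h1 hsk,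
      ih]
end

section
/- Let G be a group, m ∈ G, A a ℤ/2-algebra, and c : G → A a function with c(e) = 0 and c(g₁ * g₂) + c(g₁ * m * g₂) = c(g₁) * c(g₂) for all g₁, g₂ ∈ G. Then for every k ∈ ℕ and all g₁, g₂ ∈ G, c(g₁ * m^(2k+1) * g₂) = c(g₁ * g₂) + c(g₁) * c(g₂). -/
/-! Solving the skein relation for the term with `m` inserted (signs are irrelevant in
characteristic 2) gives `c (g₁ * m * g₂) = c (g₁ * g₂) + c g₁ * c g₂`. Taking `g₂ = 1` and using
`c 1 = 0` shows `c (g * m) = c g`, so inserting `m` twice adds the correction `c g₁ * c g₂` twice,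
which cancels: even powers of `m` can be inserted freely, and an odd power acts like `m` itself. -/

theorem add_self_eq_zero_of_module_zmod_two {A : Type*} [AddCommGroup A] [Module (ZMod 2) A]
    (a : A) : a + a = 0 := by
  rw [← two_smul (ZMod 2) a, show (2 : ZMod 2) = 0 from rfl, zero_smul]

section Skein

variable {G A : Type*} [Monoid G] [NonUnitalNonAssocRing A] [Module (ZMod 2) A] {m : G}
  {c : G → A}

theorem skein_mul_meridian_mul (hsk : ∀ g₁ g₂ : G, c (g₁ * g₂) + c (g₁ * m * g₂) = c g₁ * c g₂)
    (g₁ g₂ : G) : c (g₁ * m * g₂) = c (g₁ * g₂) + c g₁ * c g₂ := by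
  rw [← hsk, ← add_assoc, add_self_eq_zero_of_module_zmod_two, zero_add]

variable (hsk : ∀ g₁ g₂ : G, c (g₁ * g₂) + c (g₁ * m * g₂) = c g₁ * c g₂) (h1 : c 1 = 0)
include hsk h1

theorem skein_mul_meridian (g : G) : c (g * m) = c g := by
  simpa [h1] using skein_mul_meridian_mul hsk g 1

theorem skein_mul_meridian_sq_mul (g₁ g₂ : G) : c (g₁ * m ^ 2 * g₂) = c (g₁ * g₂) := by
  rw [pow_two, ← mul_assoc, skein_mul_meridian_mul hsk, skein_mul_meridian_mul hsk,
    skein_mul_meridian hsk h1, add_assoc, add_self_eq_zero_of_module_zmod_two, add_zero]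

theorem skein_mul_meridian_pow_even_mul (k : ℕ) (g₁ g₂ : G) :
    c (g₁ * m ^ (2 * k) * g₂) = c (g₁ * g₂) := by
  induction k with
  | zero => simp
  | succ k ih => rw [mul_add_one, pow_add, ← mul_assoc, skein_mul_meridian_sq_mul hsk h1, ih]

end Skein

/-- Inserting an odd power of the meridian changes the cord-algebra value by one skein term. -/
theorem cord_odd_meridian_power
    {G : Type*} [Group G] {A : Type*} [Ring A] [Algebra (ZMod 2) A]
    (m : G) (c : G → A) (h1 : c 1 = 0)
    (hsk : ∀ g₁ g₂ : G, c (g₁ * g₂) + c (g₁ * m * g₂) = c g₁ * c g₂) :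
    ∀ (k : ℕ) (g₁ g₂ : G), c (g₁ * m ^ (2 * k + 1) * g₂) = c (g₁ * g₂) + c g₁ * c g₂ := by
  intro k g₁ g₂
  rw [pow_succ, show g₁ * (m ^ (2 * k) * m) * g₂ = g₁ * m ^ (2 * k) * (m * g₂) by
      simp only [mul_assoc],
    skein_mul_meridian_pow_even_mul hsk h1, ← mul_assoc, skein_mul_meridian_mul hsk]
end

section
/- Let G be the group presented as ⟨a, μ | μaμ = aμa⟩ (the trefoil knot group). In the group algebra 𝔽₂[G], the element s := (1 + μ) * a * μ⁻¹ * a⁻¹ satisfies s ≠ μ * s * μ⁻¹. -/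
/-!
The braid relation `μaμ = aμa` says that conjugation by `μ` sends `aμ⁻¹a⁻¹` to `a⁻¹`. Hence, in any
ring receiving `G`, `s - μsμ⁻¹ = (1 + μ)(a - μ)μ⁻¹a⁻¹`, and it suffices that `(1 + μ)(a - μ) ≠ 0`
in `𝔽₂[G]`. This is detected by the representation `G → GL₂(𝔽₂)`, `a ↦ !![0,1;1,0]`,
`μ ↦ !![1,1;0,1]`, under which `(1 + μ)(a - μ)` maps to `!![1,1;0,0]`.
-/

open MonoidAlgebra

/-- The defining relator μaμ(aμa)⁻¹ of the trefoil knot group, in the free group on two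
generators (`false` ↦ a, `true` ↦ μ). -/
def trefoilRel : FreeGroup Bool :=
  FreeGroup.of true * FreeGroup.of false * FreeGroup.of true *
    (FreeGroup.of false * FreeGroup.of true * FreeGroup.of false)⁻¹

def TrefoilGroup : Type := PresentedGroup ({trefoilRel} : Set (FreeGroup Bool))

instance : Group TrefoilGroup := by unfold TrefoilGroup; infer_instance

theorem conj_mul_inv_mul_inv_eq_inv_of_braid {G : Type*} [Group G] {a μ : G}
    (h : μ * a * μ = a * μ * a) : μ * (a * μ⁻¹ * a⁻¹) * μ⁻¹ = a⁻¹ := by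
  have h' : μ⁻¹ * a⁻¹ * μ⁻¹ = a⁻¹ * μ⁻¹ * a⁻¹ := by
    simpa only [mul_inv_rev, mul_assoc] using congrArg (·⁻¹) h
  calc μ * (a * μ⁻¹ * a⁻¹) * μ⁻¹ = μ * a * (μ⁻¹ * a⁻¹ * μ⁻¹) := by group
    _ = a⁻¹ := by rw [h']; group

section Braid

variable {G R : Type*} [Group G] [Ring R] (φ : G →* R) {a μ : G}

theorem sub_conj_eq_of_braid (h : μ * a * μ = a * μ * a) :
    (1 + φ μ) * φ a * φ μ⁻¹ * φ a⁻¹ - φ μ * ((1 + φ μ) * φ a * φ μ⁻¹ * φ a⁻¹) * φ μ⁻¹ =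
      (1 + φ μ) * (φ a - φ μ) * φ μ⁻¹ * φ a⁻¹ := by
  have hconj : φ μ * (φ a * φ μ⁻¹ * φ a⁻¹) * φ μ⁻¹ = φ a⁻¹ := by
    simp only [← map_mul, conj_mul_inv_mul_inv_eq_inv_of_braid h]
  have hμ : φ μ * φ μ⁻¹ = 1 := by rw [← map_mul, mul_inv_cancel, map_one]
  calc _ = (1 + φ μ) * (φ a * φ μ⁻¹ * φ a⁻¹) -
        (1 + φ μ) * (φ μ * (φ a * φ μ⁻¹ * φ a⁻¹) * φ μ⁻¹) := by noncomm_ring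
    _ = (1 + φ μ) * (φ a * φ μ⁻¹ * φ a⁻¹ - φ μ * φ μ⁻¹ * φ a⁻¹) := by
        rw [hconj, hμ, one_mul, mul_sub]
    _ = _ := by noncomm_ring

theorem ne_conj_of_braid (h : μ * a * μ = a * μ * a) (hne : (1 + φ μ) * (φ a - φ μ) ≠ 0) :
    (1 + φ μ) * φ a * φ μ⁻¹ * φ a⁻¹ ≠ φ μ * ((1 + φ μ) * φ a * φ μ⁻¹ * φ a⁻¹) * φ μ⁻¹ := by
  have hunit : IsUnit (φ μ⁻¹ * φ a⁻¹) := ((Group.isUnit _).map φ).mul ((Group.isUnit _).map φ)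
  rwa [← sub_ne_zero, sub_conj_eq_of_braid φ h, mul_assoc _ (φ μ⁻¹), Ne,
    hunit.mul_left_eq_zero]

end Braid

namespace TrefoilGroup

def a : TrefoilGroup := PresentedGroup.of false

def μ : TrefoilGroup := PresentedGroup.of true

theorem braid : μ * a * μ = a * μ * a := by
  have h := PresentedGroup.mk_eq_mk_of_mul_inv_mem (rels := {trefoilRel}) (Set.mem_singleton _)
  simp only [map_mul] at h
  exact h

def lift {H : Type*} [Group H] (x y : H) (h : y * x * y = x * y * x) : TrefoilGroup →* H :=
  PresentedGroup.toGroup (rels := {trefoilRel}) (f := fun b => if b then y else x) <| by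
    rintro r rfl
    simp [trefoilRel, h]

variable {H : Type*} [Group H] (x y : H) (h : y * x * y = x * y * x)

@[simp]
theorem lift_a : lift x y h a = x :=
  PresentedGroup.toGroup.of _

@[simp]
theorem lift_μ : lift x y h μ = y :=
  PresentedGroup.toGroup.of _

end TrefoilGroup

def trefoilRep : TrefoilGroup →* GL (Fin 2) (ZMod 2) :=
  TrefoilGroup.lift ⟨!![0, 1; 1, 0], !![0, 1; 1, 0], by decide, by decide⟩
    ⟨!![1, 1; 0, 1], !![1, 1; 0, 1], by decide, by decide⟩ (by ext : 1; decide)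

theorem one_add_μ_mul_sub_ne_zero :
    (1 + of (ZMod 2) TrefoilGroup TrefoilGroup.μ) *
      (of (ZMod 2) TrefoilGroup TrefoilGroup.a - of (ZMod 2) TrefoilGroup TrefoilGroup.μ) ≠ 0 := by
  refine ne_zero_of_map (f := lift (ZMod 2) (Matrix (Fin 2) (Fin 2) (ZMod 2)) TrefoilGroup
    ((Units.coeHom _).comp trefoilRep)) ?_
  simp only [map_mul, map_add, map_sub, map_one, lift_of, MonoidHom.comp_apply,
    Units.coeHom_apply, trefoilRep, TrefoilGroup.lift_a, TrefoilGroup.lift_μ]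
  decide

/-- In the group algebra 𝔽₂[G] of the trefoil group, the element s = (1 + μ)aμ⁻¹a⁻¹ is not
fixed by conjugation by the meridian μ. -/
theorem gramain_nontrivial_on_trefoil :
    letI a : TrefoilGroup := PresentedGroup.of false
    letI μ : TrefoilGroup := PresentedGroup.of true
    letI s : MonoidAlgebra (ZMod 2) TrefoilGroup :=
      (1 + of (ZMod 2) TrefoilGroup μ) * of (ZMod 2) TrefoilGroup a *
        of (ZMod 2) TrefoilGroup μ⁻¹ * of (ZMod 2) TrefoilGroup a⁻¹
    s ≠ of (ZMod 2) TrefoilGroup μ * s * of (ZMod 2) TrefoilGroup μ⁻¹ :=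
  ne_conj_of_braid (of (ZMod 2) TrefoilGroup) TrefoilGroup.braid one_add_μ_mul_sub_ne_zero
end

section
/- Let G be a group, m ∈ G, A a ℤ/2-algebra, and c : G → A a function with c(e) = 0 and c(g₁ * g₂) + c(g₁ * m * g₂) = c(g₁) * c(g₂) for all g₁, g₂ ∈ G. Suppose φ : G → G is a group homomorphism of the form φ(g) = m^j * g * m^{-j} for some integer j. Then c ∘ φ = c. -/
/-!
Taking `g₁ = 1` or `g₂ = 1` in the skein relation and using `c 1 = 0` shows that multiplying
the argument of `c` by `m` on either side changes the sign of the value. Conjugation by `m`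
therefore changes the sign twice and preserves `c`, and the elements whose conjugation
preserves `c` form a subgroup, which then contains every power of `m`.
-/

section Skein

variable {G : Type*} [Group G] {A : Type*} [Ring A] {m : G} {c : G → A}

def conjInvariantSubgroup (c : G → A) : Subgroup G where
  carrier := {x | ∀ g, c (x * g * x⁻¹) = c g}
  one_mem' := by simp
  mul_mem' {x y} hx hy g := by
    rw [show x * y * g * (x * y)⁻¹ = x * (y * g * y⁻¹) * x⁻¹ by group, hx, hy]
  inv_mem' {x} hx g := by
    rw [← hx, show x * (x⁻¹ * g * x⁻¹⁻¹) * x⁻¹ = g by group]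

variable (h1 : c 1 = 0) (hsk : ∀ g₁ g₂ : G, c (g₁ * g₂) + c (g₁ * m * g₂) = c g₁ * c g₂)
include h1 hsk

theorem skein_apply_mul_left (g : G) : c (m * g) = -c g := by
  have h := hsk 1 g
  rw [one_mul, one_mul, h1, zero_mul] at h
  exact eq_neg_of_add_eq_zero_right h

theorem skein_apply_mul_right (g : G) : c (g * m) = -c g := by
  have h := hsk g 1
  rw [mul_one, mul_one, h1, mul_zero] at h
  exact eq_neg_of_add_eq_zero_right h

theorem skein_mem_conjInvariantSubgroup : m ∈ conjInvariantSubgroup c := by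
  intro g
  have h := skein_apply_mul_right h1 hsk (g * m⁻¹)
  rw [inv_mul_cancel_right] at h
  rw [mul_assoc, skein_apply_mul_left h1 hsk, h]

end Skein

theorem cord_meridian_power_conjugation_trivial_general
    {G : Type*} [Group G] {A : Type*} [Ring A]
    (m : G) (c : G → A) (h1 : c 1 = 0)
    (hsk : ∀ g₁ g₂ : G, c (g₁ * g₂) + c (g₁ * m * g₂) = c g₁ * c g₂)
    (φ : G →* G) (j : ℤ) (hφ : ∀ g : G, φ g = m ^ j * g * m ^ (-j)) :
    c ∘ φ = c := by
  funext g
  rw [Function.comp_apply, hφ, zpow_neg]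
  exact zpow_mem (skein_mem_conjInvariantSubgroup h1 hsk) j g

/-- Any power of the meridian conjugation acts trivially on ℤ/2 cord-algebra values. -/
theorem cord_meridian_power_conjugation_trivial
    {G : Type*} [Group G] {A : Type*} [Ring A] [Algebra (ZMod 2) A]
    (m : G) (c : G → A) (h1 : c 1 = 0)
    (hsk : ∀ g₁ g₂ : G, c (g₁ * g₂) + c (g₁ * m * g₂) = c g₁ * c g₂)
    (φ : G →* G) (j : ℤ) (hφ : ∀ g : G, φ g = m ^ j * g * m ^ (-j)) :
    c ∘ φ = c :=
  cord_meridian_power_conjugation_trivial_general m c h1 hsk φ j hφ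
end
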